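/- Let λ ∈ ℂ with λ ≠ 0 and let u : ℝ → ℂ be differentiable with continuous derivative. Let M be the fundamental solution of the ZS system at (λ, (u, u)) and let Y be the fundamental solution of the Hill equation with potential u' + u² at spectral parameter μ = λ². Define A(x) = !![1, i; u(x) - iλ, i·u(x) - λ]. Then A(0) is invertible and Y(x) = A(x) * M(x) * (A(0))⁻¹ for all x ∈ ℝ. -/

import Mathlib

open Complex Matrix

/-- `M` is the fundamental solution of the Zakharov–Shabat system at `(lam, (p, q))`:
`M' = !![-i lam, i p; -i q, i lam] * M`, `M 0 = 1`. -/
def IsZSFund (lam : ℂ) (p q : ℝ → ℂ) (M : ℝ → Matrix (Fin 2) (Fin 2) ℂ) : Prop :=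
  M 0 = 1 ∧ ∀ (x : ℝ) (i j : Fin 2), HasDerivAt (fun t => M t i j)
    ((!![-I * lam, I * p x; -I * q x, I * lam] * M x) i j) x

/-- `Y` is the fundamental solution of the Hill equation with potential `v` at spectral
parameter `mu`: `Y' = !![0, 1; v - mu, 0] * Y`, `Y 0 = 1`. -/
def IsHillFund (mu : ℂ) (v : ℝ → ℂ) (Y : ℝ → Matrix (Fin 2) (Fin 2) ℂ) : Prop :=
  Y 0 = 1 ∧ ∀ (x : ℝ) (i j : Fin 2), HasDerivAt (fun t => Y t i j)
    ((!![0, 1; v x - mu, 0] * Y x) i j) x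

/-!
Write `Z` for the ZS matrix, `H` for the Hill matrix and `A` for Chodos' matrix. The identity
`A' + A Z = H A` says that the gauge transformation `M ↦ A M` carries solutions of the ZS system to
solutions of the Hill system, so `P = A M A(0)⁻¹` solves the Hill system with `P 0 = 1`. Uniqueness
needs no Lipschitz estimate: `H` is traceless, and for a traceless `2 × 2` matrix `adj B = -B`, so
`adj P · Y` is constant for any two solutions `P`, `Y` of `X' = B X`; with `P 0 = Y 0 = 1` this
gives `adj P · Y = 1 = adj P · P`, hence `P = Y`.
-/

section EntrywiseDeriv

variable {𝔸 : Type*} [NormedCommRing 𝔸] [NormedAlgebra ℝ 𝔸] {m n p : Type*}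

def HasEntrywiseDerivAt (X : ℝ → Matrix m n 𝔸) (X' : Matrix m n 𝔸) (x : ℝ) : Prop :=
  ∀ i j, HasDerivAt (fun t => X t i j) (X' i j) x

theorem hasEntrywiseDerivAt_const (C : Matrix m n 𝔸) (x : ℝ) :
    HasEntrywiseDerivAt (fun _ => C) 0 x :=
  fun i j => hasDerivAt_const x (C i j)

theorem HasEntrywiseDerivAt.mul [Fintype n] {X : ℝ → Matrix m n 𝔸} {Z : ℝ → Matrix n p 𝔸}
    {X' : Matrix m n 𝔸} {Z' : Matrix n p 𝔸} {x : ℝ}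
    (hX : HasEntrywiseDerivAt X X' x) (hZ : HasEntrywiseDerivAt Z Z' x) :
    HasEntrywiseDerivAt (fun t => X t * Z t) (X' * Z x + X x * Z') x := by
  intro i k
  simp only [mul_apply, Matrix.add_apply, ← Finset.sum_add_distrib]
  exact HasDerivAt.fun_sum fun j _ => (hX i j).fun_mul (hZ j k)

theorem HasEntrywiseDerivAt.adjugate_fin_two {P : ℝ → Matrix (Fin 2) (Fin 2) 𝔸}
    {P' : Matrix (Fin 2) (Fin 2) 𝔸} {x : ℝ} (hP : HasEntrywiseDerivAt P P' x) :
    HasEntrywiseDerivAt (fun t => adjugate (P t)) (adjugate P') x := by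
  intro i j
  simp only [Matrix.adjugate_fin_two]
  fin_cases i <;> fin_cases j
  · exact hP 1 1
  · exact (hP 0 1).neg
  · exact (hP 1 0).neg
  · exact hP 0 0

theorem HasEntrywiseDerivAt.apply_eq_of_forall_zero {X : ℝ → Matrix m n 𝔸}
    (hX : ∀ x, HasEntrywiseDerivAt X 0 x) (x y : ℝ) : X x = X y := by
  ext i j
  exact is_const_of_deriv_eq_zero (fun t => (hX t i j).differentiableAt)
    (fun t => (hX t i j).deriv) x y

end EntrywiseDeriv

theorem Matrix.adjugate_add_self_fin_two {R : Type*} [CommRing R] (B : Matrix (Fin 2) (Fin 2) R) :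
    adjugate B + B = trace B • 1 := by
  rw [adjugate_fin_two, trace_fin_two]
  ext i j
  fin_cases i <;> fin_cases j <;> simp [add_comm]

section LinearODE

variable {𝔸 : Type*} [NormedCommRing 𝔸] [NormedAlgebra ℝ 𝔸] {n : Type*} [Fintype n]

def SolvesLinearODE (B X : ℝ → Matrix n n 𝔸) : Prop :=
  ∀ x, HasEntrywiseDerivAt X (B x * X x) x

theorem SolvesLinearODE.gauge {Z H A A' M : ℝ → Matrix n n 𝔸} (hM : SolvesLinearODE Z M)
    (hA : ∀ x, HasEntrywiseDerivAt A (A' x) x) (hAZ : ∀ x, A' x + A x * Z x = H x * A x)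
    (C : Matrix n n 𝔸) : SolvesLinearODE H (fun x => A x * M x * C) := by
  intro x
  convert ((hA x).mul (hM x)).mul (hasEntrywiseDerivAt_const C x) using 1
  simp only [Matrix.mul_zero, add_zero, ← Matrix.mul_assoc, ← Matrix.add_mul, hAZ]

theorem SolvesLinearODE.adjugate_mul_apply_eq {B P Y : ℝ → Matrix (Fin 2) (Fin 2) 𝔸}
    (hB : ∀ x, trace (B x) = 0) (hP : SolvesLinearODE B P) (hY : SolvesLinearODE B Y)
    (x y : ℝ) : adjugate (P x) * Y x = adjugate (P y) * Y y := by
  refine HasEntrywiseDerivAt.apply_eq_of_forall_zero (X := fun t => adjugate (P t) * Y t)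
    (fun t => ?_) x y
  convert (hP t).adjugate_fin_two.mul (hY t) using 1
  rw [adjugate_mul_distrib]
  calc (0 : Matrix (Fin 2) (Fin 2) 𝔸)
      = adjugate (P t) * ((trace (B t) • 1) * Y t) := by simp [hB t]
    _ = _ := by
      simp only [← adjugate_add_self_fin_two, Matrix.add_mul, Matrix.mul_add, Matrix.mul_assoc]

theorem SolvesLinearODE.eq_of_trace_eq_zero {B P Y : ℝ → Matrix (Fin 2) (Fin 2) 𝔸}
    (hB : ∀ x, trace (B x) = 0) (hP : SolvesLinearODE B P) (hY : SolvesLinearODE B Y)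
    (hP0 : P 0 = 1) (hY0 : Y 0 = 1) : P = Y := by
  have hinv {X} (hX : SolvesLinearODE B X) (hX0 : X 0 = 1) x : adjugate (P x) * X x = 1 := by
    rw [hP.adjugate_mul_apply_eq hB hX x 0, hP0, hX0, adjugate_one, Matrix.mul_one]
  funext x
  calc P x = P x * (adjugate (P x) * Y x) := by rw [hinv hY hY0, Matrix.mul_one]
    _ = Y x := by rw [← Matrix.mul_assoc, mul_eq_one_comm.mp (hinv hP hP0 x), Matrix.one_mul]

end LinearODE

def chodosMatrix (lam w : ℂ) : Matrix (Fin 2) (Fin 2) ℂ := !![1, I; w - I * lam, I * w - lam]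

theorem det_chodosMatrix (lam w : ℂ) : det (chodosMatrix lam w) = -2 * lam := by
  rw [chodosMatrix, det_fin_two_of]
  linear_combination lam * I_sq

theorem hasEntrywiseDerivAt_chodosMatrix (lam : ℂ) {u : ℝ → ℂ} {u' : ℂ} {x : ℝ}
    (hu : HasDerivAt u u' x) :
    HasEntrywiseDerivAt (fun t => chodosMatrix lam (u t)) !![0, 0; u', I * u'] x := by
  intro i j
  fin_cases i <;> fin_cases j <;>
    simp only [chodosMatrix, of_apply, cons_val', cons_val_zero, cons_val_one, cons_val_fin_one,
      Fin.zero_eta, Fin.mk_one, Fin.isValue, hasDerivAt_sub_const_iff]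
  · exact hasDerivAt_const x 1
  · exact hasDerivAt_const x I
  · exact hu
  · exact hu.const_mul I

theorem chodosMatrix_gauge (lam w w' : ℂ) :
    !![0, 0; w', I * w'] + chodosMatrix lam w * !![-I * lam, I * w; -I * w, I * lam]
      = !![0, 1; w' + w ^ 2 - lam ^ 2, 0] * chodosMatrix lam w := by
  rw [chodosMatrix, mul_fin_two, mul_fin_two]
  ext i j
  fin_cases i <;> fin_cases j <;>
    simp only [Matrix.add_apply, of_apply, cons_val', cons_val_zero, cons_val_one, cons_val_fin_one,
      Fin.zero_eta, Fin.mk_one, Fin.isValue]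
  · linear_combination (-w) * I_sq
  · linear_combination lam * I_sq
  · linear_combination (lam ^ 2 - w ^ 2) * I_sq
  · ring

theorem zs_hill_fund_conjugate
    (lam : ℂ) (hlam : lam ≠ 0) (u : ℝ → ℂ) (hu : ContDiff ℝ 1 u)
    (M Y : ℝ → Matrix (Fin 2) (Fin 2) ℂ)
    (hM : IsZSFund lam u u M)
    (hY : IsHillFund (lam ^ 2) (fun x => deriv u x + u x ^ 2) Y)
    (A : ℝ → Matrix (Fin 2) (Fin 2) ℂ)
    (hA : ∀ x : ℝ, A x = !![1, I; u x - I * lam, I * u x - lam]) :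
    IsUnit (A 0) ∧ ∀ x : ℝ, Y x = A x * M x * (A 0)⁻¹ := by
  obtain rfl : A = fun x => chodosMatrix lam (u x) := funext hA
  have hdet : IsUnit (chodosMatrix lam (u 0)).det := by
    rw [det_chodosMatrix]
    exact (mul_ne_zero (by norm_num) hlam).isUnit
  have hP : SolvesLinearODE (fun x => !![0, 1; deriv u x + u x ^ 2 - lam ^ 2, 0])
      (fun x => chodosMatrix lam (u x) * M x * (chodosMatrix lam (u 0))⁻¹) :=
    SolvesLinearODE.gauge hM.2
      (fun x => hasEntrywiseDerivAt_chodosMatrix lam (hu.differentiable one_ne_zero x).hasDerivAt)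
      (fun x => chodosMatrix_gauge lam (u x) (deriv u x)) _
  have hP0 : chodosMatrix lam (u 0) * M 0 * (chodosMatrix lam (u 0))⁻¹ = 1 := by
    rw [hM.1, Matrix.mul_one, mul_nonsing_inv _ hdet]
  have hPY := hP.eq_of_trace_eq_zero (fun x => by simp [trace_fin_two_of]) hY.2 hP0 hY.1
  exact ⟨(isUnit_iff_isUnit_det _).2 hdet, fun x => (congrFun hPY x).symm⟩
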